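/- Let P be a finite graded poset of rank r, and let v ∈ P with rk(v) = i. Then, as maps on positive labelings of P (with ρτ_{-1} interpreted as the identity): (1) T_v* = ρτ_{i-1} ∘ τ_v ∘ ρτ_{i-1}; (2) ρT_i* = ρτ_{i-1} ∘ ρτ_i ∘ ρτ_{i-1}; (3) τ_v* = ρT_0 ∘ ρT_1 ∘ ⋯ ∘ ρT_{i-1} ∘ T_v ∘ ρT_{i-1} ∘ ⋯ ∘ ρT_1 ∘ ρT_0; (4) ρτ_i* = ρT_0 ∘ ρT_1 ∘ ⋯ ∘ ρT_{i-1} ∘ ρT_i ∘ ρT_{i-1} ∘ ⋯ ∘ ρT_1 ∘ ρT_0. -/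

import Mathlib

/-!
Birational (commutative) antichain/order rowmotion on a finite poset `P`, with labels in `ℝ`
and positive labelings, following Joseph–Roby, "Birational and noncommutative lifts of
antichain toggling and rowmotion".
-/

open Finset

attribute [local instance] Classical.propDecidable

variable {P : Type*} [Fintype P] [PartialOrder P]

/-- `c` is a saturated chain in `P`: consecutive entries are covers. -/
def SatChain {P : Type*} [PartialOrder P] {k : ℕ} (c : Fin (k + 1) → P) : Prop :=
  ∀ i : Fin k, c i.castSucc ⋖ c i.succ

/-- `c` is a maximal chain of `P`: a saturated chain from a minimal element to a maximal
element of `P` (equivalently, the restriction to `P` of a maximal chain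
`0̂ ⋖ y₁ ⋖ ⋯ ⋖ y_k ⋖ 1̂` of `P̂`). -/
def MaxChain {P : Type*} [PartialOrder P] {k : ℕ} (c : Fin (k + 1) → P) : Prop :=
  SatChain c ∧ IsMin (c 0) ∧ IsMax (c (Fin.last k))

/-- `Υ_v(g)`: the sum over all maximal chains `(y₁, …, y_k)` of `P` through `v` of the
products `g(y₁)⋯g(y_k)` of the labels along the chain. -/
noncomputable def Upsilon (g : P → ℝ) (v : P) : ℝ :=
  ∑ k ∈ range (Fintype.card P),
    ∑ c ∈ univ.filter (fun c : Fin (k + 1) → P => MaxChain c ∧ ∃ j, c j = v),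
      (List.ofFn (g ∘ c)).prod

/-- The birational antichain toggle `τ_v`: it replaces the label at `v` by `C / Υ_v(g)` and
fixes all other labels. -/
noncomputable def atog (C : ℝ) (v : P) (g : P → ℝ) : P → ℝ :=
  fun x => if x = v then C / Upsilon g v else g x

/-- `∑_{y ∈ P̂, y ⋖ x} f(y)`, with the convention `f(0̂) = 1` (the unique lower cover in
`P̂` of a minimal element of `P` is `0̂`). -/
noncomputable def lowSum (f : P → ℝ) (x : P) : ℝ :=
  (if IsMin x then 1 else 0) + ∑ y ∈ univ.filter (fun y => y ⋖ x), f y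

/-- `∑_{y ∈ P̂, y ⋗ x} 1/f(y)`, with the convention `f(1̂) = C`. -/
noncomputable def upInvSum (C : ℝ) (f : P → ℝ) (x : P) : ℝ :=
  (if IsMax x then 1 / C else 0) + ∑ y ∈ univ.filter (fun y => x ⋖ y), 1 / f y

/-- The birational order toggle `T_v`: it replaces the label at `v` by
`(∑_{y ∈ P̂, y ⋖ v} f(y)) / (f(v) · ∑_{y ∈ P̂, y ⋗ v} 1/f(y))` (with `f(0̂) = 1`,
`f(1̂) = C`) and fixes all other labels. -/
noncomputable def otog (C : ℝ) (v : P) (f : P → ℝ) : P → ℝ :=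
  fun x => if x = v then lowSum f v / (f v * upInvSum C f v) else f x

/-- The birational complement map `Θ`: `(Θf)(x) = C / f(x)`. -/
noncomputable def thetaMap (C : ℝ) (f : P → ℝ) : P → ℝ := fun x => C / f x

/-- The birational down transfer `∇`: `(∇f)(x) = f(x) / ∑_{y ∈ P̂, y ⋖ x} f(y)` with
`f(0̂) = 1`. -/
noncomputable def nablaMap (f : P → ℝ) : P → ℝ := fun x => f x / lowSum f x

/-- The birational inverse up transfer `Δ⁻¹`: `(Δ⁻¹f)(x)` is the sum, over all saturated
chains `x = y₁ ⋖ y₂ ⋖ ⋯ ⋖ y_k ⋖ 1̂` in `P̂` (i.e. saturated chains of `P` starting at `x`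
and ending at a maximal element of `P`), of `f(y₁)f(y₂)⋯f(y_k)`. -/
noncomputable def deltaInvMap (f : P → ℝ) : P → ℝ := fun x =>
  ∑ k ∈ range (Fintype.card P),
    ∑ c ∈ univ.filter (fun c : Fin (k + 1) → P =>
        SatChain c ∧ c 0 = x ∧ IsMax (c (Fin.last k))),
      (List.ofFn (f ∘ c)).prod

/-- `l` is a linear extension of `P`: it lists every element of `P` exactly once, and
`l[i] < l[j]` in `P` implies `i < j`. -/
def IsLinearExtension {P : Type*} [PartialOrder P] (l : List P) : Prop :=
  l.Nodup ∧ (∀ x : P, x ∈ l) ∧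
    ∀ (i j : ℕ) (hi : i < l.length) (hj : j < l.length), l[i]'hi < l[j]'hj → i < j

/-- `l` is a linear extension of the subposet `A` of `P`. -/
def IsLinearExtensionOn {P : Type*} [PartialOrder P] (A : Set P) (l : List P) : Prop :=
  l.Nodup ∧ (∀ x : P, x ∈ l ↔ x ∈ A) ∧
    ∀ (i j : ℕ) (hi : i < l.length) (hj : j < l.length), l[i]'hi < l[j]'hj → i < j

/-- Apply the antichain toggles `τ` along the list `l`, first element of `l` first; for a
linear extension `l = (x₁,…,xₙ)` this is `τ_{xₙ} ∘ ⋯ ∘ τ_{x₂} ∘ τ_{x₁}`, i.e. birational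
antichain rowmotion `BAR`. -/
noncomputable def applyATogs (C : ℝ) (l : List P) (g : P → ℝ) : P → ℝ :=
  l.foldl (fun h v => atog C v h) g

/-- Apply the order toggles `T` along the list `l`, first element of `l` first. -/
noncomputable def applyOTogs (C : ℝ) (l : List P) (f : P → ℝ) : P → ℝ :=
  l.foldl (fun h v => otog C v h) f

/-- `rk` is a rank function exhibiting `P` as a graded poset of rank `r`: minimal elements
have rank `0`, ranks increase by `1` along covers, and maximal elements have rank `r`. -/
def IsRankFunction {P : Type*} [PartialOrder P] (rk : P → ℕ) (r : ℕ) : Prop :=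
  (∀ x : P, IsMin x → rk x = 0) ∧ (∀ x y : P, x ⋖ y → rk y = rk x + 1) ∧
    (∀ x : P, IsMax x → rk x = r)

/-- `T_v*`: the conjugate `τ_{v₁}⋯τ_{v_k} ∘ τ_v ∘ τ_{v_k}⋯τ_{v₁}` of `τ_v` by the
antichain toggles at the elements `v₁,…,v_k` covered by `v` (given as the list `lc`),
applied to `g`. -/
noncomputable def TstarApp (C : ℝ) (v : P) (lc : List P) (g : P → ℝ) : P → ℝ :=
  applyATogs C lc.reverse (atog C v (applyATogs C lc g))

/-- `τ_v* = η_v ∘ T_v ∘ η_v⁻¹` applied to `f`, where `le = (x₁,…,x_k)` is a linear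
extension of `{x : x < v}`, `η_v = T_{x₁} ∘ ⋯ ∘ T_{x_k}` and `η_v⁻¹ = T_{x_k} ∘ ⋯ ∘ T_{x₁}`. -/
noncomputable def tauStarApp (C : ℝ) (v : P) (le : List P) (f : P → ℝ) : P → ℝ :=
  le.foldr (fun w h => otog C w h) (otog C v (applyOTogs C le f))

/-!
Every toggle is an involution of the set of positive labelings, so all four identities can be
proved in the permutation group of that set, where toggling along a list `l` is the product
`compAlong T l`. Toggles at incomparable elements commute (order toggles even at any two elements
neither of which covers the other), so toggling along a list does not change under reorderings
that keep it a linear extension of its set of entries.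

For (1), `ρτ_{i-1}` is an involution and reorders as the toggles at the lower covers of `v`
followed by those at the other elements of rank `i - 1`, which are incomparable to `v`; the
latter cancel when `τ_v` is conjugated. For (3), `ρT_{i-1} ⋯ ρT_0` reorders as the toggles along
a linear extension of `{x < v}` followed by toggles at elements of rank `< i` not below `v`,
none of which covers or is covered by `v`. (2) and (4) follow because a product of conjugates by
a common element is the conjugate of the product.
-/

section Chains

variable {α : Type*} [PartialOrder α]

lemma SatChain.strictMono {k : ℕ} {c : Fin (k + 1) → α} (hc : SatChain c) : StrictMono c :=
  Fin.strictMono_iff_lt_succ.2 fun i => (hc i).lt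

lemma SatChain.cons {k : ℕ} {c : Fin (k + 1) → α} (hc : SatChain c) {x : α} (hx : x ⋖ c 0) :
    SatChain (Fin.cons x c : Fin (k + 2) → α) := by
  intro i
  induction i using Fin.cases with
  | zero => simpa using hx
  | succ j => simpa [← Fin.succ_castSucc] using hc j

lemma exists_satChain_isMax [WellFoundedLT α] [WellFoundedGT α] (x : α) :
    ∃ (k : ℕ) (c : Fin (k + 1) → α), SatChain c ∧ c 0 = x ∧ IsMax (c (Fin.last k)) := by
  induction x using WellFoundedGT.induction with
  | _ x ih =>
  by_cases hx : IsMax x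
  · exact ⟨0, fun _ => x, fun i => i.elim0, rfl, hx⟩
  obtain ⟨y, hxy⟩ := exists_covBy_of_wellFoundedLT hx
  obtain ⟨k, c, hc, rfl, hmax⟩ := ih _ hxy.lt
  exact ⟨k + 1, Fin.cons x c, hc.cons hxy, rfl, by simpa using hmax⟩

lemma exists_maxChain_mem [WellFoundedLT α] [WellFoundedGT α] (v : α) :
    ∃ (k : ℕ) (c : Fin (k + 1) → α), MaxChain c ∧ ∃ j, c j = v := by
  suffices h : ∀ (x : α) (k : ℕ) (c : Fin (k + 1) → α), SatChain c → c 0 = x →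
      IsMax (c (Fin.last k)) → (∃ j, c j = v) →
      ∃ (k : ℕ) (c : Fin (k + 1) → α), MaxChain c ∧ ∃ j, c j = v by
    obtain ⟨k, c, hc, h0, hmax⟩ := exists_satChain_isMax v
    exact h v k c hc h0 hmax ⟨0, h0⟩
  intro x
  induction x using WellFoundedLT.induction with
  | _ x ih =>
  rintro k c hc rfl hmax ⟨j, hj⟩
  by_cases hx : IsMin (c 0)
  · exact ⟨k, c, ⟨hc, hx, hmax⟩, j, hj⟩
  obtain ⟨y, hy⟩ := exists_covBy_of_wellFoundedGT hx
  exact ih y hy.lt (k + 1) (Fin.cons y c) (hc.cons hy) rfl (by simpa using hmax)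
    ⟨j.succ, by simpa using hj⟩

lemma IsLinearExtensionOn.pairwise {A : Set α} {l : List α} (hl : IsLinearExtensionOn A l) :
    l.Pairwise fun a b => ¬ b < a := by
  rw [List.pairwise_iff_getElem]
  intro i j hi hj hij hlt
  exact absurd (hl.2.2 j i hj hi hlt) (by omega)

end Chains

lemma upsilon_pos {g : P → ℝ} (hg : ∀ x, 0 < g x) (v : P) : 0 < Upsilon g v := by
  obtain ⟨k, c, hc, hv⟩ := exists_maxChain_mem v
  have hk : k < Fintype.card P := by
    simpa using Fintype.card_le_of_injective c hc.1.strictMono.injective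
  have hterm : ∀ {m : ℕ} (d : Fin (m + 1) → P), 0 < (List.ofFn (g ∘ d)).prod := fun d => by
    rw [List.prod_ofFn]
    exact Finset.prod_pos fun i _ => hg _
  refine Finset.sum_pos' (fun m _ => Finset.sum_nonneg fun d _ => (hterm d).le)
    ⟨k, mem_range.2 hk, Finset.sum_pos' (fun d _ => (hterm d).le) ⟨c, ?_, hterm c⟩⟩
  simp [hc, hv]

lemma upsilon_congr {g g' : P → ℝ} {v : P} (h : ∀ x, x ≤ v ∨ v ≤ x → g x = g' x) :
    Upsilon g v = Upsilon g' v := by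
  refine Finset.sum_congr rfl fun k _ => Finset.sum_congr rfl fun c hc => ?_
  obtain ⟨hmc, j, rfl⟩ := (Finset.mem_filter.1 hc).2
  rw [List.prod_ofFn, List.prod_ofFn]
  refine Finset.prod_congr rfl fun i _ => h _ ?_
  exact (le_total i j).imp (hmc.1.strictMono.monotone ·) (hmc.1.strictMono.monotone ·)

/-- Every maximal chain through `v` passes through `v` exactly once. -/
lemma upsilon_eq_mul_update_one (g : P → ℝ) (v : P) :
    Upsilon g v = g v * Upsilon (Function.update g v 1) v := by
  simp only [Upsilon, Finset.mul_sum]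
  refine Finset.sum_congr rfl fun k _ => Finset.sum_congr rfl fun c hc => ?_
  obtain ⟨hmc, j, rfl⟩ := (Finset.mem_filter.1 hc).2
  rw [List.prod_ofFn, List.prod_ofFn,
    Function.update_comp_eq_of_injective _ hmc.1.strictMono.injective,
    Finset.prod_update_of_mem (mem_univ j), one_mul,
    Finset.prod_eq_mul_prod_sdiff_singleton_of_mem (mem_univ j)]
  rfl

section Toggles

variable {C : ℝ}

lemma atog_eq_update (C : ℝ) (v : P) (g : P → ℝ) :
    atog C v g = Function.update g v (C / Upsilon g v) := by
  funext x
  simp [atog, Function.update_apply]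

lemma atog_pos (hC : 0 < C) (v : P) {g : P → ℝ} (hg : ∀ x, 0 < g x) (x : P) :
    0 < atog C v g x := by
  rw [atog_eq_update]
  rcases eq_or_ne x v with rfl | hx
  · simpa using div_pos hC (upsilon_pos hg x)
  · simpa [hx] using hg x

lemma atog_atog (hC : 0 < C) (v : P) {g : P → ℝ} (hg : ∀ x, 0 < g x) :
    atog C v (atog C v g) = g := by
  have hU : 0 < Upsilon (Function.update g v 1) v :=
    upsilon_pos (fun x => by rcases eq_or_ne x v with rfl | hx <;> simp [*]) v
  have hgv := hg v
  rw [atog_eq_update C v (atog C v g), atog_eq_update, Function.update_idem,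
    upsilon_eq_mul_update_one, Function.update_idem, Function.update_self,
    upsilon_eq_mul_update_one g]
  conv_rhs => rw [← Function.update_eq_self v g]
  congr 1
  field_simp

lemma atog_comm (C : ℝ) {v w : P} (hvw : ¬ v ≤ w) (hwv : ¬ w ≤ v) (g : P → ℝ) :
    atog C v (atog C w g) = atog C w (atog C v g) := by
  have hne : v ≠ w := fun h => hvw h.le
  have hU : ∀ {a b : P} (t : ℝ), ¬ a ≤ b → ¬ b ≤ a →
      Upsilon (Function.update g b t) a = Upsilon g a := fun t hab hba =>
    upsilon_congr fun x hx => Function.update_of_ne (by rintro rfl; tauto) _ _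
  rw [atog_eq_update C v, atog_eq_update C w g, atog_eq_update C w, atog_eq_update C v g,
    hU _ hvw hwv, hU _ hwv hvw, Function.update_comm hne]

lemma lowSum_update_of_not_covBy {v w : P} (h : ¬ w ⋖ v) (f : P → ℝ) (t : ℝ) :
    lowSum (Function.update f w t) v = lowSum f v := by
  unfold lowSum
  congr 1
  refine Finset.sum_congr rfl fun y hy => Function.update_of_ne ?_ _ _
  rintro rfl
  exact h (Finset.mem_filter.1 hy).2

lemma upInvSum_update_of_not_covBy (C : ℝ) {v w : P} (h : ¬ v ⋖ w) (f : P → ℝ) (t : ℝ) :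
    upInvSum C (Function.update f w t) v = upInvSum C f v := by
  unfold upInvSum
  congr 1
  refine Finset.sum_congr rfl fun y hy => ?_
  rw [Function.update_of_ne]
  rintro rfl
  exact h (Finset.mem_filter.1 hy).2

lemma lowSum_pos {f : P → ℝ} (hf : ∀ x, 0 < f x) (x : P) : 0 < lowSum f x := by
  unfold lowSum
  by_cases hx : IsMin x
  · rw [if_pos hx]
    exact add_pos_of_pos_of_nonneg one_pos (Finset.sum_nonneg fun y _ => (hf y).le)
  · obtain ⟨y, hy⟩ := exists_covBy_of_wellFoundedGT hx
    rw [if_neg hx, zero_add]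
    exact Finset.sum_pos (fun z _ => hf z) ⟨y, by simpa using hy⟩

lemma upInvSum_pos (hC : 0 < C) {f : P → ℝ} (hf : ∀ x, 0 < f x) (x : P) :
    0 < upInvSum C f x := by
  unfold upInvSum
  by_cases hx : IsMax x
  · rw [if_pos hx]
    exact add_pos_of_pos_of_nonneg (one_div_pos.2 hC)
      (Finset.sum_nonneg fun y _ => (one_div_pos.2 (hf y)).le)
  · obtain ⟨y, hy⟩ := exists_covBy_of_wellFoundedLT hx
    rw [if_neg hx, zero_add]
    exact Finset.sum_pos (fun z _ => one_div_pos.2 (hf z)) ⟨y, by simpa using hy⟩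

lemma otog_eq_update (C : ℝ) (v : P) (f : P → ℝ) :
    otog C v f = Function.update f v (lowSum f v / (f v * upInvSum C f v)) := by
  funext x
  simp [otog, Function.update_apply]

lemma otog_pos (hC : 0 < C) (v : P) {f : P → ℝ} (hf : ∀ x, 0 < f x) (x : P) :
    0 < otog C v f x := by
  rw [otog_eq_update]
  rcases eq_or_ne x v with rfl | hx
  · simpa using div_pos (lowSum_pos hf x) (mul_pos (hf x) (upInvSum_pos hC hf x))
  · simpa [hx] using hf x

lemma otog_otog (hC : 0 < C) (v : P) {f : P → ℝ} (hf : ∀ x, 0 < f x) :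
    otog C v (otog C v f) = f := by
  have hL := lowSum_pos hf v
  have hU := upInvSum_pos hC hf v
  have hfv := hf v
  rw [otog_eq_update C v (otog C v f), otog_eq_update,
    lowSum_update_of_not_covBy (lt_irrefl v ·.lt),
    upInvSum_update_of_not_covBy C (lt_irrefl v ·.lt),
    Function.update_idem, Function.update_self]
  conv_rhs => rw [← Function.update_eq_self v f]
  congr 1
  field_simp

lemma otog_comm (C : ℝ) {v w : P} (hvw : ¬ v ⋖ w) (hwv : ¬ w ⋖ v) (f : P → ℝ) :
    otog C v (otog C w f) = otog C w (otog C v f) := by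
  rcases eq_or_ne v w with rfl | hne
  · rfl
  rw [otog_eq_update C v, otog_eq_update C w f, otog_eq_update C w, otog_eq_update C v f,
    lowSum_update_of_not_covBy hwv, upInvSum_update_of_not_covBy C hvw,
    lowSum_update_of_not_covBy hvw, upInvSum_update_of_not_covBy C hwv,
    Function.update_of_ne hne, Function.update_of_ne hne.symm, Function.update_comm hne]

end Toggles

section CompAlong

variable {ι G : Type*} [Group G] (T : ι → G)

/-- `compAlong T [x₁, …, xₙ] = T xₙ * ⋯ * T x₁`: acting on the left, `T x₁` acts first. -/
def compAlong (l : List ι) : G := (l.map T).reverse.prod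

@[simp]
lemma compAlong_nil : compAlong T [] = 1 := rfl

@[simp]
lemma compAlong_cons (x : ι) (l : List ι) : compAlong T (x :: l) = compAlong T l * T x := by
  simp [compAlong]

@[simp]
lemma compAlong_append (l₁ l₂ : List ι) :
    compAlong T (l₁ ++ l₂) = compAlong T l₂ * compAlong T l₁ := by
  simp [compAlong]

lemma compAlong_flatMap {κ : Type*} (f : κ → List ι) (L : List κ) :
    compAlong T (L.flatMap f) = compAlong (fun j => compAlong T (f j)) L := by
  induction L with
  | nil => rfl
  | cons j L ih => simp [ih]

lemma compAlong_congr {T' : ι → G} {l : List ι} (h : ∀ x ∈ l, T x = T' x) :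
    compAlong T l = compAlong T' l := by
  rw [compAlong, compAlong, List.map_congr_left h]

lemma compAlong_conj (a : G) (l : List ι) :
    compAlong (fun x => a⁻¹ * T x * a) l = a⁻¹ * compAlong T l * a := by
  induction l with
  | nil => simp
  | cons x l ih =>
    rw [compAlong_cons, compAlong_cons, ih]
    group

lemma compAlong_reverse (hT : ∀ x, (T x)⁻¹ = T x) (l : List ι) :
    compAlong T l.reverse = (compAlong T l)⁻¹ := by
  induction l with
  | nil => simp
  | cons x l ih => simp [ih, hT]

lemma Commute.compAlong_right {g : G} {l : List ι} (h : ∀ x ∈ l, Commute g (T x)) :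
    Commute g (compAlong T l) :=
  Commute.list_prod_right _ _ fun y hy => by
    obtain ⟨x, hx, rfl⟩ := List.mem_map.1 (List.mem_reverse.1 hy)
    exact h x hx

/-- With `r a b := ¬ b < a`: toggling along two linear extensions of the same set agrees when
toggles at incomparable elements commute. -/
lemma compAlong_eq_of_perm {r : ι → ι → Prop}
    (hcomm : ∀ a b, r a b → r b a → Commute (T a) (T b)) {l₁ l₂ : List ι} (hp : l₁.Perm l₂)
    (h₁ : l₁.Pairwise r) (h₂ : l₂.Pairwise r) : compAlong T l₁ = compAlong T l₂ := by
  induction l₁ generalizing l₂ with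
  | nil => rw [hp.symm.eq_nil]
  | cons x l₁ ih =>
    obtain ⟨p, s, rfl⟩ := List.append_of_mem (hp.subset List.mem_cons_self)
    have hp' : l₁.Perm (p ++ s) := (hp.trans List.perm_middle).cons_inv
    have hx : Commute (T x) (compAlong T p) := Commute.compAlong_right T fun w hw =>
      hcomm x w (List.rel_of_pairwise_cons h₁ (hp'.symm.subset (List.mem_append_left s hw)))
        ((List.pairwise_append.1 h₂).2.2 w hw x List.mem_cons_self)
    have hps := ih hp' h₁.of_cons
      (h₂.sublist ((List.sublist_cons_self x s).append_left p))
    simp only [compAlong_cons, compAlong_append, hps, mul_assoc, hx.eq]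

lemma inv_compAlong_of_pairwise_commute (hT : ∀ x, (T x)⁻¹ = T x) {l : List ι}
    (hl : l.Pairwise fun a b => Commute (T a) (T b)) : (compAlong T l)⁻¹ = compAlong T l := by
  rw [← compAlong_reverse T hT]
  exact compAlong_eq_of_perm T (r := fun a b => Commute (T a) (T b)) (fun a b h _ => h)
    (List.reverse_perm l) (List.pairwise_reverse.2 (hl.imp Commute.symm)) hl

lemma conj_compAlong_append_of_commute {g : G} (l : List ι) {N : List ι}
    (hN : ∀ x ∈ N, Commute g (T x)) :
    (compAlong T (l ++ N))⁻¹ * g * compAlong T (l ++ N) =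
      (compAlong T l)⁻¹ * g * compAlong T l := by
  have hc : Commute g (compAlong T N) := Commute.compAlong_right T hN
  rw [compAlong_append, mul_inv_rev]
  calc _ = (compAlong T l)⁻¹ * ((compAlong T N)⁻¹ * (g * compAlong T N)) * compAlong T l := by
        group
    _ = _ := by rw [hc.eq, inv_mul_cancel_left]

end CompAlong

lemma foldl_coe_eq_compAlong {α ι : Type*} {p : α → Prop} (t : ι → α → α)
    (T : ι → Equiv.Perm (Subtype p)) (hT : ∀ x s, (T x s : α) = t x s) (l : List ι)
    (s : Subtype p) : l.foldl (fun h x => t x h) (s : α) = (compAlong T l s : α) := by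
  induction l generalizing s with
  | nil => rfl
  | cons x l ih => simp [← hT, ih]

abbrev PosLabeling (P : Type*) := {f : P → ℝ // ∀ x, 0 < f x}

section Perms

variable {C : ℝ} (hC : 0 < C)

noncomputable def atogPerm (v : P) : Equiv.Perm (PosLabeling P) :=
  Function.Involutive.toPerm (fun g => ⟨atog C v g, atog_pos hC v g.2⟩)
    fun g => Subtype.ext (atog_atog hC v g.2)

noncomputable def otogPerm (v : P) : Equiv.Perm (PosLabeling P) :=
  Function.Involutive.toPerm (fun f => ⟨otog C v f, otog_pos hC v f.2⟩)
    fun f => Subtype.ext (otog_otog hC v f.2)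

lemma coe_atogPerm_apply (v : P) (g : PosLabeling P) : (atogPerm hC v g : P → ℝ) = atog C v g :=
  rfl

lemma coe_otogPerm_apply (v : P) (f : PosLabeling P) : (otogPerm hC v f : P → ℝ) = otog C v f :=
  rfl

lemma atogPerm_inv (v : P) : (atogPerm hC v)⁻¹ = atogPerm hC v :=
  Function.Involutive.toPerm_symm _

lemma otogPerm_inv (v : P) : (otogPerm hC v)⁻¹ = otogPerm hC v :=
  Function.Involutive.toPerm_symm _

lemma commute_atogPerm {v w : P} (hvw : ¬ v < w) (hwv : ¬ w < v) :
    Commute (atogPerm hC v) (atogPerm hC w) := by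
  rcases eq_or_ne v w with rfl | hne
  · exact Commute.refl _
  refine Equiv.ext fun g => Subtype.ext ?_
  exact atog_comm C (fun h => hvw (h.lt_of_ne hne)) (fun h => hwv (h.lt_of_ne hne.symm)) g

lemma commute_otogPerm {v w : P} (hvw : ¬ v ⋖ w) (hwv : ¬ w ⋖ v) :
    Commute (otogPerm hC v) (otogPerm hC w) :=
  Equiv.ext fun f => Subtype.ext (otog_comm C hvw hwv f)

lemma inv_compAlong_atogPerm {l : List P} (hl : ∀ a ∈ l, ∀ b ∈ l, ¬ a < b) :
    (compAlong (atogPerm hC) l)⁻¹ = compAlong (atogPerm hC) l :=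
  inv_compAlong_of_pairwise_commute _ (atogPerm_inv hC)
    (List.pairwise_of_forall_mem_list fun a ha b hb =>
      commute_atogPerm hC (hl a ha b hb) (hl b hb a ha))

lemma inv_compAlong_otogPerm {l : List P} (hl : ∀ a ∈ l, ∀ b ∈ l, ¬ a < b) :
    (compAlong (otogPerm hC) l)⁻¹ = compAlong (otogPerm hC) l :=
  inv_compAlong_of_pairwise_commute _ (otogPerm_inv hC)
    (List.pairwise_of_forall_mem_list fun a ha b hb =>
      commute_otogPerm hC (fun h => hl a ha b hb h.lt) (fun h => hl b hb a ha h.lt))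

lemma applyATogs_coe (l : List P) (g : PosLabeling P) :
    applyATogs C l g = (compAlong (atogPerm hC) l g : P → ℝ) :=
  foldl_coe_eq_compAlong _ _ (fun _ _ => rfl) l g

lemma applyOTogs_coe (l : List P) (f : PosLabeling P) :
    applyOTogs C l f = (compAlong (otogPerm hC) l f : P → ℝ) :=
  foldl_coe_eq_compAlong _ _ (fun _ _ => rfl) l f

lemma tstarApp_coe (v : P) (lc : List P) (g : PosLabeling P) :
    TstarApp C v lc g = (((compAlong (atogPerm hC) lc)⁻¹ * atogPerm hC v *
      compAlong (atogPerm hC) lc) g : P → ℝ) := by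
  rw [TstarApp, applyATogs_coe hC, ← coe_atogPerm_apply hC, applyATogs_coe hC,
    compAlong_reverse _ (atogPerm_inv hC)]
  rfl

lemma tauStarApp_coe (v : P) (le : List P) (f : PosLabeling P) :
    tauStarApp C v le f = (((compAlong (otogPerm hC) le)⁻¹ * otogPerm hC v *
      compAlong (otogPerm hC) le) f : P → ℝ) := by
  rw [tauStarApp, ← List.foldl_reverse, applyOTogs_coe hC, ← coe_otogPerm_apply hC,
    ← applyOTogs, applyOTogs_coe hC, compAlong_reverse _ (otogPerm_inv hC)]
  rfl

lemma foldl_tstarApp_coe (lcf : P → List P) (l : List P) (g : PosLabeling P) :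
    l.foldl (fun h w => TstarApp C w (lcf w) h) g = (compAlong (fun w =>
      (compAlong (atogPerm hC) (lcf w))⁻¹ * atogPerm hC w * compAlong (atogPerm hC) (lcf w))
      l g : P → ℝ) :=
  foldl_coe_eq_compAlong _ _ (fun w s => (tstarApp_coe hC w (lcf w) s).symm) l g

lemma foldl_tauStarApp_coe (lef : P → List P) (l : List P) (f : PosLabeling P) :
    l.foldl (fun h w => tauStarApp C w (lef w) h) f = (compAlong (fun w =>
      (compAlong (otogPerm hC) (lef w))⁻¹ * otogPerm hC w * compAlong (otogPerm hC) (lef w))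
      l f : P → ℝ) :=
  foldl_coe_eq_compAlong _ _ (fun w s => (tauStarApp_coe hC w (lef w) s).symm) l f

lemma foldl_applyOTogs_coe (rl : ℕ → List P) (L : List ℕ) (f : PosLabeling P) :
    L.foldl (fun h j => applyOTogs C (rl j) h) f =
      (compAlong (fun j => compAlong (otogPerm hC) (rl j)) L f : P → ℝ) :=
  foldl_coe_eq_compAlong _ _ (fun j s => (applyOTogs_coe hC (rl j) s).symm) L f

end Perms

section RankLists

variable {α : Type*} {rk : α → ℕ} {rl : ℕ → List α}

lemma mem_flatMap_range_of_rankLists (hrl : ∀ j, (rl j).Nodup ∧ ∀ x, x ∈ rl j ↔ rk x = j)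
    {i : ℕ} {x : α} : x ∈ (List.range i).flatMap rl ↔ rk x < i := by
  simp [List.mem_flatMap, (hrl _).2]

lemma nodup_flatMap_range_of_rankLists (hrl : ∀ j, (rl j).Nodup ∧ ∀ x, x ∈ rl j ↔ rk x = j)
    (i : ℕ) : ((List.range i).flatMap rl).Nodup := by
  refine List.nodup_flatMap.2 ⟨fun j _ => (hrl j).1, List.nodup_range.pairwise_of_forall_ne ?_⟩
  intro j _ k _ hjk x hxj hxk
  exact hjk (((hrl j).2 x).1 hxj ▸ ((hrl k).2 x).1 hxk)

lemma pairwise_flatMap_range_of_rankLists (hrl : ∀ j, (rl j).Nodup ∧ ∀ x, x ∈ rl j ↔ rk x = j)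
    (i : ℕ) : ((List.range i).flatMap rl).Pairwise fun a b => rk a ≤ rk b := by
  refine List.pairwise_flatMap.2 ⟨fun j _ => ?_, List.pairwise_lt_range.imp fun hjk a ha b hb => ?_⟩
  · exact List.pairwise_of_forall_mem_list fun a ha b hb => by
      rw [((hrl j).2 a).1 ha, ((hrl j).2 b).1 hb]
  · rw [((hrl _).2 a).1 ha, ((hrl _).2 b).1 hb]
    exact hjk.le

lemma mem_prevRankList (hrl : ∀ j, (rl j).Nodup ∧ ∀ x, x ∈ rl j ↔ rk x = j) {i : ℕ} {x : α} :
    x ∈ (if i = 0 then [] else rl (i - 1)) ↔ rk x + 1 = i := by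
  split_ifs <;> simp [(hrl _).2] <;> omega

lemma nodup_prevRankList (hrl : ∀ j, (rl j).Nodup ∧ ∀ x, x ∈ rl j ↔ rk x = j) (i : ℕ) :
    (if i = 0 then [] else rl (i - 1)).Nodup := by
  split_ifs
  exacts [List.nodup_nil, (hrl _).1]

end RankLists

section Ranks

variable {rk : P → ℕ} {r : ℕ}

lemma IsRankFunction.strictMono (hrk : IsRankFunction rk r) : StrictMono rk := by
  let := Fintype.toLocallyFiniteOrder (α := P)
  exact (strictMono_iff_forall_covBy rk).2 fun a b h => by rw [hrk.2.1 a b h]; omega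

lemma IsRankFunction.covBy_of_lt (hrk : IsRankFunction rk r) {a b : P} (hab : a < b)
    (h : rk b = rk a + 1) : a ⋖ b := by
  obtain ⟨c, hac, hcb⟩ := exists_le_covBy_of_lt hab
  obtain rfl | hac := hac.eq_or_lt
  · exact hcb
  · have := hrk.strictMono hac
    have := hrk.2.1 c b hcb
    omega

lemma IsRankFunction.not_lt_of_rk_le (hrk : IsRankFunction rk r) {a b : P} (h : rk a ≤ rk b) :
    ¬ b < a :=
  fun hba => (hrk.strictMono hba).not_ge h

variable {C : ℝ} (hC : 0 < C)

lemma conj_atogPerm_lowerCovers_eq (hrk : IsRankFunction rk r) {v : P} {lc R : List P}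
    (hlc : lc.Nodup ∧ ∀ y, y ∈ lc ↔ y ⋖ v) (hR : R.Nodup) (hmem : ∀ x, x ∈ R ↔ rk x + 1 = rk v) :
    (compAlong (atogPerm hC) lc)⁻¹ * atogPerm hC v * compAlong (atogPerm hC) lc =
      (compAlong (atogPerm hC) R)⁻¹ * atogPerm hC v * compAlong (atogPerm hC) R := by
  set N := R.filter fun w => ¬ w ⋖ v
  have hN : ∀ w, w ∈ N ↔ rk w + 1 = rk v ∧ ¬ w ⋖ v := by simp [N, hmem]
  have hcommR : ∀ a ∈ R, ∀ b ∈ R, Commute (atogPerm hC a) (atogPerm hC b) := fun a ha b hb =>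
    commute_atogPerm hC (hrk.not_lt_of_rk_le (by linarith [(hmem a).1 ha, (hmem b).1 hb]))
      (hrk.not_lt_of_rk_le (by linarith [(hmem a).1 ha, (hmem b).1 hb]))
  have hperm : R.Perm (lc ++ N) := by
    refine (List.perm_ext_iff_of_nodup hR (hlc.1.append (hR.filter _) ?_)).2 fun x => ?_
    · exact fun y hy hyN => ((hN y).1 hyN).2 ((hlc.2 y).1 hy)
    · have := hrk.2.1 x v
      grind
  have hR' : compAlong (atogPerm hC) R = compAlong (atogPerm hC) (lc ++ N) :=
    compAlong_eq_of_perm _ (r := fun a b => Commute (atogPerm hC a) (atogPerm hC b))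
      (fun _ _ h _ => h) hperm (List.pairwise_of_forall_mem_list hcommR)
      (List.pairwise_of_forall_mem_list fun a ha b hb =>
        hcommR a (hperm.symm.subset ha) b (hperm.symm.subset hb))
  rw [hR', conj_compAlong_append_of_commute]
  intro w hw
  obtain ⟨hw, hwv⟩ := (hN w).1 hw
  exact commute_atogPerm hC (hrk.not_lt_of_rk_le (by omega))
    fun h => hwv (hrk.covBy_of_lt h hw.symm)

lemma conj_otogPerm_linearExtension_eq (hrk : IsRankFunction rk r) {v : P} {le A : List P}
    (hle : IsLinearExtensionOn {x | x < v} le) (hA : A.Nodup)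
    (hsorted : A.Pairwise fun a b => rk a ≤ rk b) (hmem : ∀ x, x ∈ A ↔ rk x < rk v) :
    (compAlong (otogPerm hC) le)⁻¹ * otogPerm hC v * compAlong (otogPerm hC) le =
      (compAlong (otogPerm hC) A)⁻¹ * otogPerm hC v * compAlong (otogPerm hC) A := by
  set N := A.filter fun a => ¬ a < v
  have hN : ∀ a, a ∈ N ↔ rk a < rk v ∧ ¬ a < v := by simp [N, hmem]
  have hlemem : ∀ x, x ∈ le ↔ x < v := hle.2.1
  have hperm : A.Perm (le ++ N) := by
    refine (List.perm_ext_iff_of_nodup hA (hle.1.append (hA.filter _) ?_)).2 fun x => ?_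
    · exact fun y hy hyN => ((hN y).1 hyN).2 ((hlemem y).1 hy)
    · have : x < v → rk x < rk v := fun h => hrk.strictMono h
      grind
  have hpw : (le ++ N).Pairwise fun a b => ¬ b < a := by
    refine List.pairwise_append.2 ⟨hle.pairwise, ?_, fun a ha b hb hba => ?_⟩
    · exact (hsorted.imp hrk.not_lt_of_rk_le).filter _
    · exact ((hN b).1 hb).2 (hba.trans ((hlemem a).1 ha))
  have hA' : compAlong (otogPerm hC) A = compAlong (otogPerm hC) (le ++ N) :=
    compAlong_eq_of_perm _ (r := fun a b => ¬ b < a)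
      (fun a b hab hba => commute_otogPerm hC (fun h => hba h.lt) (fun h => hab h.lt)) hperm
      (hsorted.imp hrk.not_lt_of_rk_le) hpw
  rw [hA', conj_compAlong_append_of_commute]
  intro w hw
  obtain ⟨hw, hwv⟩ := (hN w).1 hw
  exact commute_otogPerm hC (fun h => hrk.not_lt_of_rk_le hw.le h.lt) fun h => hwv h.lt

lemma conj_otogPerm_linearExtension_eq_rankLists (hrk : IsRankFunction rk r) {rl : ℕ → List P}
    (hrl : ∀ j, (rl j).Nodup ∧ ∀ x, x ∈ rl j ↔ rk x = j) {v : P} {i : ℕ} (hv : rk v = i)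
    {le : List P} (hle : IsLinearExtensionOn {x | x < v} le) :
    (compAlong (otogPerm hC) le)⁻¹ * otogPerm hC v * compAlong (otogPerm hC) le =
      (compAlong (fun j => compAlong (otogPerm hC) (rl j)) (List.range i))⁻¹ * otogPerm hC v *
        compAlong (fun j => compAlong (otogPerm hC) (rl j)) (List.range i) := by
  rw [← compAlong_flatMap]
  exact conj_otogPerm_linearExtension_eq hC hrk hle (nodup_flatMap_range_of_rankLists hrl i)
    (pairwise_flatMap_range_of_rankLists hrl i) fun x => hv ▸ mem_flatMap_range_of_rankLists hrl

end Ranks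

/-- Let `P` be a finite graded poset of rank `r` and `v ∈ P` with
`rk v = i`.  Writing `ρT_j`/`ρτ_j` for the (commuting) products of order/antichain
toggles of rank `j` (realized along a list `rl j` of the rank-`j` elements), and
interpreting `ρτ_{-1}` as the identity, we have, as maps on positive labelings:
(1) `T_v* = ρτ_{i-1} ∘ τ_v ∘ ρτ_{i-1}`;
(2) `ρT_i* = ρτ_{i-1} ∘ ρτ_i ∘ ρτ_{i-1}`;
(3) `τ_v* = ρT_0 ∘ ρT_1 ∘ ⋯ ∘ ρT_{i-1} ∘ T_v ∘ ρT_{i-1} ∘ ⋯ ∘ ρT_1 ∘ ρT_0`;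
(4) `ρτ_i* = ρT_0 ∘ ρT_1 ∘ ⋯ ∘ ρT_{i-1} ∘ ρT_i ∘ ρT_{i-1} ∘ ⋯ ∘ ρT_1 ∘ ρT_0`,
where `ρT_i* = ∏_{rk x = i} T_x*` and `ρτ_i* = ∏_{rk x = i} τ_x*`. -/
theorem rank_toggle_identities (C : ℝ) (hC : 0 < C)
    (rk : P → ℕ) (r : ℕ) (hrk : IsRankFunction rk r)
    (v : P) (i : ℕ) (hv : rk v = i)
    (rl : ℕ → List P) (hrl : ∀ j, (rl j).Nodup ∧ ∀ x : P, x ∈ rl j ↔ rk x = j)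
    (lcf : P → List P) (hlcf : ∀ w : P, (lcf w).Nodup ∧ ∀ y : P, y ∈ lcf w ↔ y ⋖ w)
    (lef : P → List P) (hlef : ∀ w : P, IsLinearExtensionOn {x : P | x < w} (lef w)) :
    -- (1) `T_v* = ρτ_{i-1} ∘ τ_v ∘ ρτ_{i-1}`
    (∀ g : P → ℝ, (∀ x, 0 < g x) →
      TstarApp C v (lcf v) g
        = applyATogs C (if i = 0 then [] else rl (i - 1))
            (atog C v (applyATogs C (if i = 0 then [] else rl (i - 1)) g)))
    ∧
    -- (2) `ρT_i* = ρτ_{i-1} ∘ ρτ_i ∘ ρτ_{i-1}`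
    (∀ g : P → ℝ, (∀ x, 0 < g x) →
      (rl i).foldl (fun h w => TstarApp C w (lcf w) h) g
        = applyATogs C (if i = 0 then [] else rl (i - 1))
            (applyATogs C (rl i)
              (applyATogs C (if i = 0 then [] else rl (i - 1)) g)))
    ∧
    -- (3) `τ_v* = ρT_0 ∘ ⋯ ∘ ρT_{i-1} ∘ T_v ∘ ρT_{i-1} ∘ ⋯ ∘ ρT_0`
    (∀ f : P → ℝ, (∀ x, 0 < f x) →
      tauStarApp C v (lef v) f
        = (List.range i).reverse.foldl (fun h j => applyOTogs C (rl j) h)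
            (otog C v ((List.range i).foldl (fun h j => applyOTogs C (rl j) h) f)))
    ∧
    -- (4) `ρτ_i* = ρT_0 ∘ ⋯ ∘ ρT_{i-1} ∘ ρT_i ∘ ρT_{i-1} ∘ ⋯ ∘ ρT_0`
    (∀ f : P → ℝ, (∀ x, 0 < f x) →
      (rl i).foldl (fun h w => tauStarApp C w (lef w) h) f
        = (List.range i).reverse.foldl (fun h j => applyOTogs C (rl j) h)
            (applyOTogs C (rl i)
              ((List.range i).foldl (fun h j => applyOTogs C (rl j) h) f))) := by
  set R := if i = 0 then [] else rl (i - 1)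
  have hRmem : ∀ x, x ∈ R ↔ rk x + 1 = i := fun x => mem_prevRankList hrl
  have hρτ : (compAlong (atogPerm hC) R)⁻¹ = compAlong (atogPerm hC) R :=
    inv_compAlong_atogPerm hC fun a ha b hb =>
      hrk.not_lt_of_rk_le (by linarith [(hRmem a).1 ha, (hRmem b).1 hb])
  have hρT : ∀ j, (compAlong (otogPerm hC) (rl j))⁻¹ = compAlong (otogPerm hC) (rl j) :=
    fun j => inv_compAlong_otogPerm hC fun a ha b hb =>
      hrk.not_lt_of_rk_le (by rw [((hrl j).2 a).1 ha, ((hrl j).2 b).1 hb])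
  have hTstar := fun w (hw : rk w = i) =>
    conj_atogPerm_lowerCovers_eq hC hrk (R := R) (hlcf w) (nodup_prevRankList hrl i)
      (hw ▸ hRmem)
  have htauStar := fun w (hw : rk w = i) =>
    conj_otogPerm_linearExtension_eq_rankLists hC hrk hrl hw (hlef w)
  have hrank : ∀ w ∈ rl i, rk w = i := fun w hw => ((hrl i).2 w).1 hw
  refine ⟨fun g hg => ?_, fun g hg => ?_, fun f hf => ?_, fun f hf => ?_⟩
  · lift g to PosLabeling P using hg
    rw [tstarApp_coe hC, hTstar v hv, hρτ]
    simp only [applyATogs_coe hC, ← coe_atogPerm_apply hC, Equiv.Perm.mul_apply]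
  · lift g to PosLabeling P using hg
    rw [foldl_tstarApp_coe hC, compAlong_congr _ fun w hw => hTstar w (hrank w hw),
      compAlong_conj, hρτ]
    simp only [applyATogs_coe hC, Equiv.Perm.mul_apply]
  · lift f to PosLabeling P using hf
    rw [tauStarApp_coe hC, htauStar v hv]
    simp only [foldl_applyOTogs_coe hC, ← coe_otogPerm_apply hC, compAlong_reverse _ hρT,
      Equiv.Perm.mul_apply]
  · lift f to PosLabeling P using hf
    rw [foldl_tauStarApp_coe hC, compAlong_congr _ fun w hw => htauStar w (hrank w hw),
      compAlong_conj]
    simp only [foldl_applyOTogs_coe hC, applyOTogs_coe hC, compAlong_reverse _ hρT,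
      Equiv.Perm.mul_apply]
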